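/- arXiv:2410.04832 — 5 statements merged into one kernel-verified Lean document; each statement's English description precedes it below -/
import Mathlib

section
/- Let X be a Banach space, U a bounded nonempty subset of X, (V_m)_{m∈ℕ} a sequence of bounded nonempty subsets of X, A ⊆ U a countable subset, and B_m ⊆ V_m countable subsets for each m. Then there exists a countable set Ã with A ⊆ Ã ⊆ U and ρ̄_H(Ã, B_m) ≤ ρ̄_H(U, V_m) for all m ∈ ℕ. -/
/-!
Each `b` in the countable set `⋃ m, B m` has a sequence in `U` whose distances to `b` tend to
`inf_{u ∈ U} ‖u - b‖`. Adding all these sequences to `A` gives a countable `Ã ⊆ U` that is exactly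
as close to every point of every `B m` as `U` is. Since `b ↦ inf_{u ∈ U} ‖u - b‖` is 1-Lipschitz, it
is bounded on the bounded set `V m`, so its supremum over `B m ⊆ V m` is at most that over `V m`.
-/

/-- The one-sided Hausdorff distance `ρ̄_H(A,B) = sup_{b ∈ B} inf_{a ∈ A} ‖a - b‖`. -/
noncomputable def rhoBar {X : Type*} [NormedAddCommGroup X] (A B : Set X) : ℝ :=
  ⨆ b : B, ⨅ a : A, ‖(a : X) - (b : X)‖

open Metric Set Filter Topology

theorem Metric.exists_countable_subset_infEDist_eq {α : Type*} [PseudoEMetricSpace α]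
    (x : α) (U : Set α) : ∃ S ⊆ U, S.Countable ∧ infEDist x S = infEDist x U := by
  rcases U.eq_empty_or_nonempty with rfl | hU
  · exact ⟨∅, subset_rfl, countable_empty, rfl⟩
  obtain ⟨d, -, hd_lim, hd_mem⟩ :=
    exists_seq_tendsto_sInf (hU.image (edist x)) (OrderBot.bddBelow _)
  choose y hyU hyd using hd_mem
  refine ⟨range y, range_subset_iff.2 hyU, countable_range y,
    le_antisymm ?_ (infEDist_anti (range_subset_iff.2 hyU))⟩
  rw [sInf_image] at hd_lim
  refine ge_of_tendsto (hd_lim : Tendsto d atTop (𝓝 (infEDist x U)))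
    (Eventually.of_forall fun n => ?_)
  exact hyd n ▸ infEDist_le_edist_of_mem (mem_range_self n)

theorem Metric.exists_countable_between_infEDist_eq {α : Type*} [PseudoEMetricSpace α]
    {A U T : Set α} (hAU : A ⊆ U) (hA : A.Countable) (hT : T.Countable) :
    ∃ S, A ⊆ S ∧ S ⊆ U ∧ S.Countable ∧ ∀ x ∈ T, infEDist x S = infEDist x U := by
  choose! S hSU hS hSx using fun x => exists_countable_subset_infEDist_eq x U
  have hsub : A ∪ ⋃ x ∈ T, S x ⊆ U := union_subset hAU (iUnion₂_subset fun x _ => hSU x)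
  refine ⟨A ∪ ⋃ x ∈ T, S x, subset_union_left, hsub, hA.union (hT.biUnion fun x _ => hS x),
    fun x hx => le_antisymm ?_ (infEDist_anti hsub)⟩
  calc infEDist x (A ∪ ⋃ x ∈ T, S x) ≤ infEDist x (S x) :=
        infEDist_anti (subset_union_of_subset_right (subset_biUnion_of_mem hx) _)
    _ = infEDist x U := hSx x

theorem rhoBar_eq_iSup_infDist {X : Type*} [NormedAddCommGroup X] (A B : Set X) :
    rhoBar A B = ⨆ b : B, infDist (b : X) A := by
  simp only [rhoBar, infDist_eq_iInf, dist_eq_norm_sub']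

theorem rhoBar_le_rhoBar {X : Type*} [NormedAddCommGroup X] {A A' B B' : Set X}
    (hB : B ⊆ B') (hB' : Bornology.IsBounded B') (h : ∀ b ∈ B, infDist b A ≤ infDist b A') :
    rhoBar A B ≤ rhoBar A' B' := by
  rw [rhoBar_eq_iSup_infDist, rhoBar_eq_iSup_infDist]
  have hbdd : BddAbove (range fun b : B' => infDist (b : X) A') := by
    simpa only [image_eq_range] using ((lipschitz_infDist_pt A').isBounded_image hB').bddAbove
  refine Real.iSup_le (fun b => (h b b.2).trans (le_ciSup hbdd ⟨b, hB b.2⟩)) ?_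
  exact Real.iSup_nonneg fun _ => infDist_nonneg

theorem stmt4_general {X : Type*} [NormedAddCommGroup X]
    (U : Set X)
    (V : ℕ → Set X) (hVb : ∀ m, Bornology.IsBounded (V m))
    (A : Set X) (hAU : A ⊆ U) (hAc : A.Countable)
    (B : ℕ → Set X) (hBV : ∀ m, B m ⊆ V m) (hBc : ∀ m, (B m).Countable) :
    ∃ Atil : Set X, A ⊆ Atil ∧ Atil ⊆ U ∧ Atil.Countable ∧
      ∀ m : ℕ, rhoBar Atil (B m) ≤ rhoBar U (V m) := by
  obtain ⟨Atil, hA, hU, hc, hdist⟩ :=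
    exists_countable_between_infEDist_eq hAU hAc (countable_iUnion hBc)
  refine ⟨Atil, hA, hU, hc, fun m => rhoBar_le_rhoBar (hBV m) (hVb m) fun b hb => ?_⟩
  exact (congrArg ENNReal.toReal (hdist b (mem_iUnion_of_mem m hb))).le

/-- for a bounded nonempty `U`, bounded nonempty sets `V m`, a countable
`A ⊆ U` and countable `B m ⊆ V m`, there is a countable `Ã` with `A ⊆ Ã ⊆ U` and
`ρ̄_H(Ã, B m) ≤ ρ̄_H(U, V m)` for all `m`. -/
theorem stmt4 {X : Type*} [NormedAddCommGroup X] [NormedSpace ℝ X] [CompleteSpace X]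
    (U : Set X) (hU : U.Nonempty) (hUb : Bornology.IsBounded U)
    (V : ℕ → Set X) (hV : ∀ m, (V m).Nonempty) (hVb : ∀ m, Bornology.IsBounded (V m))
    (A : Set X) (hAU : A ⊆ U) (hAc : A.Countable)
    (B : ℕ → Set X) (hBV : ∀ m, B m ⊆ V m) (hBc : ∀ m, (B m).Countable) :
    ∃ Atil : Set X, A ⊆ Atil ∧ Atil ⊆ U ∧ Atil.Countable ∧
      ∀ m : ℕ, rhoBar Atil (B m) ≤ rhoBar U (V m) :=
  stmt4_general U V hVb A hAU hAc B hBV hBc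
end

section
/- For every n ∈ ℕ and every Banach space X with dim X ≥ 2^n, there exist finite-dimensional compact convex subsets V_1, ..., V_n of the unit ball of X such that for every collection of reals a_1, ..., a_n, ‖∑_{k=1}^n a_k R(V_k)‖ ≥ (1/2)∑_{k=1}^n |a_k|, where R is the Rådström (support function) embedding and the norm is the sup norm over the dual unit sphere. -/
/-- The support function `R(A)(x*) = sup_{a ∈ A} x*(a)`. -/
noncomputable def suppFn {X : Type*} [NormedAddCommGroup X] [NormedSpace ℝ X]
    (A : Set X) (f : X →L[ℝ] ℝ) : ℝ :=
  ⨆ a : A, f a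

/-!
Take an Auerbach system `(e_T, f_T)` indexed by the subsets `T` of `{1, …, n}`: vectors of the
unit ball and norm-one functionals with `f_T (e_S) = δ_{TS}`. Let `V_k` be the convex hull of
the `e_T` with `k ∈ T`. Then `R(V_k)(f_T)` is `1` if `k ∈ T` and `0` otherwise, so evaluating
`∑ a_k R(V_k)` at `f_T` gives `∑_{k ∈ T} a_k`. For `T = {k | a_k ≥ 0}` and its complement these
two sums differ by `∑ |a_k|`, so one of them has absolute value at least half of it.

The Auerbach system comes from a tuple in the unit ball of the span maximising the determinant;
the `f_T` are the Cramer-rule functionals of that tuple, extended by Hahn–Banach.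
-/

open Finset Function

namespace Module.Basis

variable {E : Type*} [NormedAddCommGroup E] [NormedSpace ℝ E] [FiniteDimensional ℝ E]
  {ι : Type*} [Fintype ι] [DecidableEq ι]

theorem continuous_det (b : Basis ι ℝ E) : Continuous fun v : ι → E => b.det v := by
  simp_rw [b.det_apply]
  exact (continuous_matrix fun i j =>
    (b.coord i).continuous_of_finiteDimensional.comp (continuous_apply j)).matrix_det

theorem exists_isMaxOn_abs_det (b : Basis ι ℝ E) :
    ∃ e : ι → E, (∀ i, ‖e i‖ ≤ 1) ∧ b.det e ≠ 0 ∧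
      ∀ v : ι → E, (∀ i, ‖v i‖ ≤ 1) → |b.det v| ≤ |b.det e| := by
  let K : Set (ι → E) := Set.univ.pi fun _ => Metric.closedBall 0 1
  have hK : ∀ v, v ∈ K ↔ ∀ i, ‖v i‖ ≤ 1 := by simp [K]
  obtain ⟨e, heK, hmax⟩ :=
    (isCompact_univ_pi fun _ => isCompact_closedBall (0 : E) 1).exists_isMaxOn
      ⟨0, (hK 0).2 (by simp)⟩ b.continuous_det.abs.continuousOn
  have hunit : b.det (fun i => ‖b i‖⁻¹ • b i) ≠ 0 := by
    rw [b.det.map_smul_univ, b.det_self, smul_eq_mul, mul_one]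
    exact prod_ne_zero_iff.mpr fun i _ => inv_ne_zero (norm_ne_zero_iff.mpr (b.ne_zero i))
  refine ⟨e, (hK e).1 heK, fun h0 => hunit ?_, fun v hv => hmax ((hK v).2 hv)⟩
  have hle : |b.det fun i => ‖b i‖⁻¹ • b i| ≤ |b.det e| :=
    hmax ((hK _).2 fun i => (norm_smul_inv_norm (b.ne_zero i)).le)
  simpa [h0] using hle

theorem exists_auerbach (b : Basis ι ℝ E) :
    ∃ (e : ι → E) (f : ι → E →L[ℝ] ℝ), (∀ i, ‖e i‖ ≤ 1) ∧ (∀ i, ‖f i‖ = 1) ∧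
      ∀ i j, f i (e j) = if i = j then 1 else 0 := by
  obtain ⟨e, he, hdet, hmax⟩ := b.exists_isMaxOn_abs_det
  let f : ι → E →L[ℝ] ℝ := fun i =>
    LinearMap.toContinuousLinearMap ((b.det e)⁻¹ • b.det.toMultilinearMap.toLinearMap e i)
  have hf : ∀ i y, f i y = b.det (update e i y) / b.det e := fun i y => by
    simp [f, div_eq_inv_mul]
  have hef : ∀ i j, f i (e j) = if i = j then 1 else 0 := by
    intro i j
    rcases eq_or_ne i j with rfl | hij
    · simp [hf, hdet]
    · rw [hf, if_neg hij,
        b.det.map_eq_zero_of_eq _ (i := i) (j := j) (by simp [hij.symm]) hij, zero_div]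
  refine ⟨e, f, he, fun i => le_antisymm ?_ ?_, hef⟩
  · refine ContinuousLinearMap.opNorm_le_of_unit_norm zero_le_one fun y hy => ?_
    rw [hf, Real.norm_eq_abs, abs_div, div_le_one (abs_pos.2 hdet)]
    refine hmax _ fun j => ?_
    rcases eq_or_ne j i with rfl | hj
    · simp [hy]
    · simpa [hj] using he j
  · simpa [hef] using (f i).le_opNorm_of_le (he i)

end Module.Basis

theorem LinearIndependent.exists_auerbach {X : Type*} [NormedAddCommGroup X]
    [NormedSpace ℝ X] {ι : Type*} [Fintype ι] [DecidableEq ι] {v : ι → X}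
    (hv : LinearIndependent ℝ v) :
    ∃ (e : ι → X) (f : ι → X →L[ℝ] ℝ), (∀ i, ‖e i‖ ≤ 1) ∧ (∀ i, ‖f i‖ = 1) ∧
      ∀ i j, f i (e j) = if i = j then 1 else 0 := by
  have : FiniteDimensional ℝ (Submodule.span ℝ (Set.range v)) :=
    FiniteDimensional.span_of_finite ℝ (Set.finite_range v)
  obtain ⟨e, f, he, hf, hef⟩ := (Module.Basis.span hv).exists_auerbach
  choose F hFf hFn using fun i => exists_extension_norm_eq _ (f i)
  exact ⟨fun i => e i, F, he, fun i => (hFn i).trans (hf i),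
    fun i j => (hFf i (e j)).trans (hef i j)⟩

section SupportFunction

variable {X : Type*} [NormedAddCommGroup X] [NormedSpace ℝ X]

theorem suppFn_eq_of_isGreatest {A : Set X} {f : X →L[ℝ] ℝ} {c : ℝ}
    (h : IsGreatest (f '' A) c) : suppFn A f = c := by
  rw [suppFn, iSup, ← Set.image_eq_range]
  exact h.csSup_eq

theorem IsGreatest.image_convexHull {s : Set X} {f : X →L[ℝ] ℝ} {c : ℝ}
    (h : IsGreatest (f '' s) c) : IsGreatest (f '' convexHull ℝ s) c := by
  obtain ⟨⟨x, hx, rfl⟩, hub⟩ := h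
  refine ⟨⟨x, subset_convexHull ℝ s hx, rfl⟩, ?_⟩
  have hhull : convexHull ℝ s ⊆ {y | f y ≤ f x} :=
    convexHull_min (fun y hy => hub ⟨y, hy, rfl⟩)
      (convex_halfSpace_le f.toLinearMap.isLinear _)
  rintro _ ⟨y, hy, rfl⟩
  exact hhull hy

theorem abs_suppFn_le {A : Set X} (hA : A ⊆ Metric.closedBall 0 1) (hne : A.Nonempty)
    (f : X →L[ℝ] ℝ) : |suppFn A f| ≤ ‖f‖ := by
  have hbound : ∀ a : A, |f a| ≤ ‖f‖ := fun a => by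
    simpa using f.le_opNorm_of_le (mem_closedBall_zero_iff.mp (hA a.2))
  have hbdd : BddAbove (Set.range fun a : A => f a) :=
    ⟨‖f‖, by rintro _ ⟨a, rfl⟩; exact (abs_le.1 (hbound a)).2⟩
  obtain ⟨a, ha⟩ := hne
  have : Nonempty A := ⟨⟨a, ha⟩⟩
  exact abs_le.2 ⟨(abs_le.1 (hbound ⟨a, ha⟩)).1.trans (le_ciSup hbdd ⟨a, ha⟩),
    ciSup_le fun a => (abs_le.1 (hbound a)).2⟩

theorem bddAbove_range_abs_sum_mul_suppFn {ι : Type*} [Fintype ι] {A : ι → Set X}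
    (hA : ∀ k, A k ⊆ Metric.closedBall 0 1) (hne : ∀ k, (A k).Nonempty) (a : ι → ℝ) :
    BddAbove (Set.range fun f : {f : X →L[ℝ] ℝ // ‖f‖ = 1} =>
      |∑ k, a k * suppFn (A k) f.1|) := by
  refine ⟨∑ k, |a k|, ?_⟩
  rintro _ ⟨⟨f, hf⟩, rfl⟩
  calc |∑ k, a k * suppFn (A k) f| ≤ ∑ k, |a k| * |suppFn (A k) f| := by
        simpa only [abs_mul] using
          abs_sum_le_sum_abs (fun k => a k * suppFn (A k) f) univ
    _ ≤ ∑ k, |a k| := sum_le_sum fun k _ =>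
        mul_le_of_le_one_right (abs_nonneg _) (hf ▸ abs_suppFn_le (hA k) (hne k) f)

end SupportFunction

theorem sum_abs_le_two_mul_of_abs_sum_le {ι : Type*} [Fintype ι] (a : ι → ℝ) {M : ℝ}
    (h : ∀ T : Finset ι, |∑ k ∈ T, a k| ≤ M) : ∑ k, |a k| ≤ 2 * M := by
  classical
  have hsplit : ∑ k, |a k| = ∑ k with 0 ≤ a k, a k - ∑ k with ¬ 0 ≤ a k, a k := by
    rw [← sum_filter_add_sum_filter_not univ (fun k => 0 ≤ a k), sub_eq_add_neg,
      ← sum_neg_distrib]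
    congr 1 <;> refine sum_congr rfl fun k hk => ?_
    · exact abs_of_nonneg (mem_filter.1 hk).2
    · exact abs_of_neg (not_le.1 (mem_filter.1 hk).2)
  rw [hsplit]
  linarith [le_abs_self (∑ k with 0 ≤ a k, a k), neg_abs_le (∑ k with ¬ 0 ≤ a k, a k),
    h {k | 0 ≤ a k}, h {k | ¬ 0 ≤ a k}]

section MemberHull

variable {X : Type*} [NormedAddCommGroup X] [NormedSpace ℝ X] {ι : Type*}

/-- The paper's `V_k`. -/
def memberHull (e : Finset ι → X) (k : ι) : Set X :=
  convexHull ℝ (e '' {T | k ∈ T})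

theorem memberHull_nonempty (e : Finset ι → X) (k : ι) : (memberHull e k).Nonempty :=
  ⟨e {k}, subset_convexHull ℝ _ ⟨{k}, mem_singleton_self k, rfl⟩⟩

theorem isCompact_memberHull [Finite ι] (e : Finset ι → X) (k : ι) :
    IsCompact (memberHull e k) :=
  ((Set.toFinite _).image e).isCompact_convexHull (𝕜 := ℝ)

theorem finiteDimensional_span_memberHull [Finite ι] (e : Finset ι → X) (k : ι) :
    FiniteDimensional ℝ (Submodule.span ℝ (memberHull e k)) := by
  have : FiniteDimensional ℝ (Submodule.span ℝ (e '' {T | k ∈ T})) :=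
    FiniteDimensional.span_of_finite ℝ ((Set.toFinite _).image e)
  refine Submodule.finiteDimensional_of_le (S₂ := Submodule.span ℝ (e '' {T | k ∈ T}))
    (Submodule.span_le.2 ?_)
  exact convexHull_min Submodule.subset_span (Submodule.span ℝ _).convex

variable {e : Finset ι → X}

theorem memberHull_subset_closedBall (he : ∀ T, ‖e T‖ ≤ 1) (k : ι) :
    memberHull e k ⊆ Metric.closedBall 0 1 :=
  convexHull_min (by rintro _ ⟨T, -, rfl⟩; exact mem_closedBall_zero_iff.2 (he T))
    (convex_closedBall 0 1)

variable {f : Finset ι → X →L[ℝ] ℝ}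

theorem suppFn_memberHull [DecidableEq ι] (hef : ∀ T S, f T (e S) = if T = S then 1 else 0)
    (T : Finset ι) (k : ι) : suppFn (memberHull e k) (f T) = if k ∈ T then 1 else 0 := by
  refine suppFn_eq_of_isGreatest (IsGreatest.image_convexHull ?_)
  by_cases hk : k ∈ T
  · refine ⟨⟨e T, ⟨T, hk, rfl⟩, by simp [hef, hk]⟩, ?_⟩
    rintro _ ⟨_, ⟨S, -, rfl⟩, rfl⟩
    rw [hef, if_pos hk]
    split_ifs <;> norm_num
  · have hkT : T ≠ {k} := fun h => hk (h ▸ mem_singleton_self k)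
    refine ⟨⟨e {k}, ⟨{k}, mem_singleton_self k, rfl⟩, by simp [hef, hk, hkT]⟩, ?_⟩
    rintro _ ⟨_, ⟨S, hS, rfl⟩, rfl⟩
    have hTS : T ≠ S := fun h => hk (h ▸ hS)
    simp [hef, hk, hTS]

theorem sum_mul_suppFn_memberHull [Fintype ι] [DecidableEq ι]
    (hef : ∀ T S, f T (e S) = if T = S then 1 else 0)
    (a : ι → ℝ) (T : Finset ι) :
    ∑ k, a k * suppFn (memberHull e k) (f T) = ∑ k ∈ T, a k := by
  simp [suppFn_memberHull hef, mul_ite, sum_ite_mem]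

end MemberHull

theorem stmt9_general {X : Type*} [NormedAddCommGroup X] [NormedSpace ℝ X]
    (n : ℕ) (hdim : ((2 ^ n : ℕ) : Cardinal) ≤ Module.rank ℝ X) :
    ∃ V : Fin n → Set X,
      (∀ k, V k ⊆ Metric.closedBall (0 : X) 1) ∧
      (∀ k, IsCompact (V k)) ∧ (∀ k, Convex ℝ (V k)) ∧
      (∀ k, FiniteDimensional ℝ (Submodule.span ℝ (V k))) ∧
      ∀ a : Fin n → ℝ,
        (1 / 2) * ∑ k, |a k| ≤
          ⨆ f : {f : X →L[ℝ] ℝ // ‖f‖ = 1}, |∑ k, a k * suppFn (V k) f.1| := by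
  obtain ⟨w, hw⟩ := exists_linearIndependent_of_le_rank hdim
  let E : Finset (Fin n) ≃ Fin (2 ^ n) := Fintype.equivFinOfCardEq (by simp)
  obtain ⟨e, f, he, hf, hef⟩ := (hw.comp E E.injective).exists_auerbach
  refine ⟨memberHull e, memberHull_subset_closedBall he, isCompact_memberHull e,
    fun k => convex_convexHull ℝ _, finiteDimensional_span_memberHull e, fun a => ?_⟩
  have hbdd := bddAbove_range_abs_sum_mul_suppFn (memberHull_subset_closedBall he)
    (memberHull_nonempty e) a
  have hT : ∀ T, |∑ k ∈ T, a k| ≤ ⨆ φ : {f : X →L[ℝ] ℝ // ‖f‖ = 1},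
      |∑ k, a k * suppFn (memberHull e k) φ.1| := fun T =>
    le_ciSup_of_le hbdd ⟨f T, hf T⟩ (by rw [sum_mul_suppFn_memberHull hef])
  linarith [sum_abs_le_two_mul_of_abs_sum_le a hT]

/-- if `dim X ≥ 2^n` there are finite-dimensional compact convex subsets
`V 1, ..., V n` of the unit ball such that for all reals `a k`,
`‖∑ a k R(V k)‖ ≥ (1/2) ∑ |a k|`, the norm being the sup norm over the dual unit sphere. -/
theorem stmt9 {X : Type*} [NormedAddCommGroup X] [NormedSpace ℝ X] [CompleteSpace X]
    (n : ℕ) (hdim : ((2 ^ n : ℕ) : Cardinal) ≤ Module.rank ℝ X) :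
    ∃ V : Fin n → Set X,
      (∀ k, V k ⊆ Metric.closedBall (0 : X) 1) ∧
      (∀ k, IsCompact (V k)) ∧ (∀ k, Convex ℝ (V k)) ∧
      (∀ k, FiniteDimensional ℝ (Submodule.span ℝ (V k))) ∧
      ∀ a : Fin n → ℝ,
        (1 / 2) * ∑ k, |a k| ≤
          ⨆ f : {f : X →L[ℝ] ℝ // ‖f‖ = 1}, |∑ k, a k * suppFn (V k) f.1| :=
  stmt9_general n hdim
end

section
/- For every n ∈ ℕ and every Banach space X with dim X ≥ 2^n, there exist finite-dimensional compact convex subsets V_1, ..., V_n of the unit ball of X such that for every choice of signs θ_k = ±1, ‖∑_{k=1}^n θ_k R(V_k)‖ ≥ n/2, where R is the support function embedding with sup norm over the dual unit sphere. -/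
/-!
Index an Auerbach system `(e A, F A)` of `X` (`‖e A‖ ≤ 1`, `‖F A‖ = 1`, `F A (e B) = δ A B`) by
the `2 ^ n` subsets `A` of `Fin n`, and let `V k` be the unit ball of `span {e A | k ∈ A}`.
Then `R(V k)(F A)` is `1` for `k ∈ A` and `0` otherwise, so `∑ θ k R(V k)` takes the value
`∑ k ∈ A, θ k` at `F A`. For `A` the larger of `{θ = 1}` and `{θ = -1}` this is at least `n / 2`
in absolute value.
-/

open Function Metric

namespace Module.Basis

variable {E : Type*} [NormedAddCommGroup E] [NormedSpace ℝ E] [FiniteDimensional ℝ E]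
  {ι : Type*} [Fintype ι] [DecidableEq ι] (B : Basis ι ℝ E)

theorem continuous_det_s10 : Continuous (B.det : (ι → E) → ℝ) := by
  have : Continuous fun v : ι → E => B.toMatrix v :=
    continuous_matrix fun i j =>
      (B.coord i).continuous_of_finiteDimensional.comp (continuous_apply j)
  convert this.matrix_det using 1
  ext v
  exact B.det_apply v

theorem exists_isMaxOn_abs_det_s10 :
    ∃ e ∈ closedBall (0 : ι → E) 1, B.det e ≠ 0 ∧
      IsMaxOn (fun v => |B.det v|) (closedBall 0 1) e := by
  obtain ⟨e, he, hmax⟩ := (isCompact_closedBall (0 : ι → E) 1).exists_isMaxOn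
    ⟨0, mem_closedBall_self zero_le_one⟩ B.continuous_det_s10.abs.continuousOn
  refine ⟨e, he, fun hzero => ?_, hmax⟩
  let b : ι → E := fun i => (‖B i‖⁻¹ : ℝ) • B i
  have hb : b ∈ closedBall 0 1 := by
    rw [closedBall_pi _ zero_le_one]
    intro i _
    show ‖B i‖⁻¹ • B i ∈ closedBall 0 1
    rw [mem_closedBall_zero_iff, _root_.norm_smul, norm_inv, norm_norm,
      inv_mul_cancel₀ (norm_ne_zero_iff.2 (B.ne_zero i))]
  have hdet_b : B.det b = ∏ i, ‖B i‖⁻¹ := by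
    simpa [b, B.det_self] using B.det.toMultilinearMap.map_smul_univ (fun i => ‖B i‖⁻¹) B
  have := hmax hb
  simp only [Set.mem_ofPred_eq, hzero, abs_zero, hdet_b, abs_nonpos_iff] at this
  exact Finset.prod_ne_zero_iff.2
    (fun i _ => inv_ne_zero (norm_ne_zero_iff.2 (B.ne_zero i))) this

end Module.Basis

section Auerbach

variable {ι : Type*} [Fintype ι] [DecidableEq ι]

theorem exists_auerbach_system {E : Type*} [NormedAddCommGroup E] [NormedSpace ℝ E]
    [FiniteDimensional ℝ E] (B : Module.Basis ι ℝ E) :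
    ∃ (e : ι → E) (f : ι → StrongDual ℝ E), (∀ i, ‖e i‖ ≤ 1) ∧ (∀ i, ‖f i‖ ≤ 1) ∧
      ∀ i j, f i (e j) = if i = j then 1 else 0 := by
  obtain ⟨e, he, hdet, hmax⟩ := B.exists_isMaxOn_abs_det_s10
  rw [closedBall_pi _ zero_le_one] at he hmax
  -- By Cramer's rule `f i x` is the `i`-th coordinate of `x` in the basis `e`; maximality of
  -- `|det e|` bounds it by `1` on the unit ball.
  let f : ι → StrongDual ℝ E := fun i =>
    LinearMap.toContinuousLinearMap ((B.det e)⁻¹ • B.det.toMultilinearMap.toLinearMap e i)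
  have hf : ∀ i x, f i x = (B.det e)⁻¹ * B.det (update e i x) := fun _ _ => rfl
  refine ⟨e, f, fun i => mem_closedBall_zero_iff.1 (he i trivial), fun i => ?_, fun i j => ?_⟩
  · refine ContinuousLinearMap.opNorm_le_of_unit_norm zero_le_one fun x hx => ?_
    have hupdate : update e i x ∈ Set.univ.pi fun _ => closedBall (0 : E) 1 := by
      intro j _
      rcases eq_or_ne j i with rfl | hj
      · simpa using hx.le
      · simpa [hj] using he j trivial
    rw [Real.norm_eq_abs, hf, abs_mul, abs_inv, inv_mul_le_one₀ (abs_pos.2 hdet)]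
    exact hmax hupdate
  · rcases eq_or_ne i j with rfl | hij
    · rw [hf, update_eq_self, inv_mul_cancel₀ hdet, if_pos rfl]
    · rw [hf, if_neg hij, B.det.map_update_self (v := e) hij, mul_zero]

theorem exists_auerbach_system_of_card_le_rank {X : Type*} [NormedAddCommGroup X]
    [NormedSpace ℝ X] (h : (Fintype.card ι : Cardinal) ≤ Module.rank ℝ X) :
    ∃ (e : ι → X) (F : ι → StrongDual ℝ X), (∀ i, ‖e i‖ ≤ 1) ∧ (∀ i, ‖F i‖ = 1) ∧
      ∀ i j, F i (e j) = if i = j then 1 else 0 := by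
  obtain ⟨v, hv⟩ := Module.le_rank_iff.1 h
  let w := v ∘ Fintype.equivFin ι
  have hw : LinearIndependent ℝ w := hv.comp _ (Fintype.equivFin ι).injective
  let W := Submodule.span ℝ (Set.range w)
  have : FiniteDimensional ℝ W := FiniteDimensional.span_of_finite ℝ (Set.finite_range w)
  obtain ⟨e, f, he, hf, hfe⟩ := exists_auerbach_system (Module.Basis.span hw)
  choose F hFf hFnorm using fun i => exists_extension_norm_eq W (f i)
  have hFe : ∀ i j, F i (e j) = if i = j then 1 else 0 :=
    fun i j => (hFf i (e j)).trans (hfe i j)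
  refine ⟨fun i => e i, F, he, fun i => le_antisymm (hFnorm i ▸ hf i) ?_, hFe⟩
  calc 1 = F i (e i) := by rw [hFe, if_pos rfl]
    _ ≤ ‖F i‖ * ‖e i‖ := (le_abs_self _).trans ((F i).le_opNorm _)
    _ ≤ ‖F i‖ := mul_le_of_le_one_right (norm_nonneg _) (he i)

end Auerbach

section SupportFunction

variable {X : Type*} [NormedAddCommGroup X] [NormedSpace ℝ X] {S : Set X}

theorem apply_le_norm_of_mem_closedBall (g : StrongDual ℝ X) {x : X} (hx : x ∈ closedBall 0 1) :
    g x ≤ ‖g‖ :=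
  (le_abs_self _).trans <| (g.le_opNorm x).trans <|
    mul_le_of_le_one_right (norm_nonneg g) (mem_closedBall_zero_iff.1 hx)

theorem le_suppFn (hS : S ⊆ closedBall 0 1) (g : StrongDual ℝ X) {x : X} (hx : x ∈ S) :
    g x ≤ suppFn S g :=
  le_ciSup ⟨‖g‖, by rintro _ ⟨a, rfl⟩; exact apply_le_norm_of_mem_closedBall g (hS a.2)⟩
    (⟨x, hx⟩ : S)

theorem suppFn_le_norm (hS : S ⊆ closedBall 0 1) (hne : S.Nonempty) (g : StrongDual ℝ X) :
    suppFn S g ≤ ‖g‖ :=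
  haveI := hne.to_subtype
  ciSup_le fun a => apply_le_norm_of_mem_closedBall g (hS a.2)

theorem abs_suppFn_le_norm (hS : S ⊆ closedBall 0 1) (h0 : (0 : X) ∈ S) (g : StrongDual ℝ X) :
    |suppFn S g| ≤ ‖g‖ := by
  have hnonneg : 0 ≤ suppFn S g := by simpa using le_suppFn hS g h0
  exact (abs_of_nonneg hnonneg).trans_le (suppFn_le_norm hS ⟨0, h0⟩ g)

theorem suppFn_eq_zero (hne : S.Nonempty) {g : StrongDual ℝ X} (hg : ∀ x ∈ S, g x = 0) :
    suppFn S g = 0 := by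
  have := hne.to_subtype
  simp only [suppFn, fun a : S => hg a a.2, ciSup_const]

theorem suppFn_eq_one (hS : S ⊆ closedBall 0 1) {g : StrongDual ℝ X} (hg : ‖g‖ = 1) {x : X}
    (hx : x ∈ S) (hgx : g x = 1) : suppFn S g = 1 :=
  le_antisymm (hg ▸ suppFn_le_norm hS ⟨x, hx⟩ g) (hgx ▸ le_suppFn hS g hx)

end SupportFunction

namespace Submodule

variable {X : Type*} [NormedAddCommGroup X] [NormedSpace ℝ X] (Y : Submodule ℝ X)

def unitClosedBall : Set X := (↑) '' closedBall (0 : Y) 1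

theorem unitClosedBall_subset_closedBall : Y.unitClosedBall ⊆ closedBall 0 1 := by
  rintro _ ⟨y, hy, rfl⟩
  simpa using hy

theorem zero_mem_unitClosedBall : (0 : X) ∈ Y.unitClosedBall :=
  ⟨0, mem_closedBall_self zero_le_one, rfl⟩

theorem unitClosedBall_subset : Y.unitClosedBall ⊆ Y := by
  rintro _ ⟨y, -, rfl⟩
  exact y.2

theorem convex_unitClosedBall : Convex ℝ Y.unitClosedBall :=
  (convex_closedBall _ _).linear_image Y.subtype

theorem isCompact_unitClosedBall [FiniteDimensional ℝ Y] : IsCompact Y.unitClosedBall :=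
  (isCompact_closedBall _ _).image continuous_subtype_val

theorem finiteDimensional_span_unitClosedBall [FiniteDimensional ℝ Y] :
    FiniteDimensional ℝ (span ℝ Y.unitClosedBall) :=
  Submodule.finiteDimensional_of_le (span_le.2 Y.unitClosedBall_subset)

end Submodule

theorem exists_two_mul_abs_sum_ge {ι : Type*} [Fintype ι] (θ : ι → ℝ) :
    ∃ s : Finset ι, ∑ i, |θ i| ≤ 2 * |∑ i ∈ s, θ i| := by
  classical
  set P := Finset.univ.filter fun i => 0 ≤ θ i
  set N := Finset.univ.filter fun i => ¬0 ≤ θ i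
  have hsplit : ∑ i, |θ i| ≤ |∑ i ∈ P, θ i| + |∑ i ∈ N, θ i| := by
    rw [← Finset.sum_filter_add_sum_filter_not Finset.univ fun i => 0 ≤ θ i]
    gcongr ?_ + ?_
    · rw [Finset.sum_congr rfl fun i hi => abs_of_nonneg (Finset.mem_filter.1 hi).2]
      exact le_abs_self _
    · rw [Finset.sum_congr rfl fun i hi => abs_of_neg (not_le.1 (Finset.mem_filter.1 hi).2),
        Finset.sum_neg_distrib]
      exact neg_le_abs _
  rcases le_total |∑ i ∈ P, θ i| |∑ i ∈ N, θ i| with h | h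
  · exact ⟨N, by linarith⟩
  · exact ⟨P, by linarith⟩

section Biorthogonal

variable {X : Type*} [NormedAddCommGroup X] [NormedSpace ℝ X] {ι : Type*} [DecidableEq ι]
  {e : ι → X} {F : ι → StrongDual ℝ X}

theorem suppFn_unitClosedBall_span_biorthogonal (he : ∀ i, ‖e i‖ ≤ 1) (hF : ∀ i, ‖F i‖ = 1)
    (hFe : ∀ i j, F i (e j) = if i = j then 1 else 0) (p : ι → Prop) [DecidablePred p] (i : ι) :
    suppFn (Submodule.span ℝ (e '' {j | p j})).unitClosedBall (F i) = if p i then 1 else 0 := by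
  set Y := Submodule.span ℝ (e '' {j | p j})
  split_ifs with hi
  · refine suppFn_eq_one Y.unitClosedBall_subset_closedBall (hF i) ⟨⟨e i, ?_⟩, ?_, rfl⟩ ?_
    · exact Submodule.subset_span ⟨i, hi, rfl⟩
    · simpa using he i
    · rw [hFe, if_pos rfl]
  · have hY : Y ≤ LinearMap.ker (F i : X →ₗ[ℝ] ℝ) := by
      rw [Submodule.span_le]
      rintro _ ⟨j, hj, rfl⟩
      have hij : i ≠ j := fun h => hi (h ▸ hj)
      simp [hFe, hij]
    exact suppFn_eq_zero ⟨0, Y.zero_mem_unitClosedBall⟩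
      fun x hx => hY (Y.unitClosedBall_subset hx)

end Biorthogonal

theorem bddAbove_range_abs_sum_suppFn {X : Type*} [NormedAddCommGroup X] [NormedSpace ℝ X]
    {ι : Type*} [Fintype ι] {V : ι → Set X} (hV : ∀ k, V k ⊆ closedBall 0 1)
    (hV0 : ∀ k, (0 : X) ∈ V k) (θ : ι → ℝ) :
    BddAbove (Set.range fun g : {g : StrongDual ℝ X // ‖g‖ = 1} =>
      |∑ k, θ k * suppFn (V k) g.1|) := by
  refine ⟨∑ k, |θ k|, ?_⟩
  rintro _ ⟨⟨g, hg⟩, rfl⟩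
  refine (Finset.abs_sum_le_sum_abs _ _).trans (Finset.sum_le_sum fun k _ => ?_)
  rw [abs_mul]
  exact mul_le_of_le_one_right (abs_nonneg _)
    ((abs_suppFn_le_norm (hV k) (hV0 k) g).trans_eq hg)

theorem stmt10_general {X : Type*} [NormedAddCommGroup X] [NormedSpace ℝ X]
    (n : ℕ) (hdim : ((2 ^ n : ℕ) : Cardinal) ≤ Module.rank ℝ X) :
    ∃ V : Fin n → Set X,
      (∀ k, V k ⊆ Metric.closedBall (0 : X) 1) ∧
      (∀ k, IsCompact (V k)) ∧ (∀ k, Convex ℝ (V k)) ∧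
      (∀ k, FiniteDimensional ℝ (Submodule.span ℝ (V k))) ∧
      ∀ θ : Fin n → ℝ, (∀ k, θ k = 1 ∨ θ k = -1) →
        (n : ℝ) / 2 ≤
          ⨆ f : {f : X →L[ℝ] ℝ // ‖f‖ = 1}, |∑ k, θ k * suppFn (V k) f.1| := by
  obtain ⟨e, F, he, hF, hFe⟩ := exists_auerbach_system_of_card_le_rank (ι := Finset (Fin n))
    (by simpa [Fintype.card_finset] using hdim)
  let Y : Fin n → Submodule ℝ X := fun k => Submodule.span ℝ (e '' {A | k ∈ A})
  have : ∀ k, FiniteDimensional ℝ (Y k) :=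
    fun k => FiniteDimensional.span_of_finite ℝ (Set.toFinite _)
  refine ⟨fun k => (Y k).unitClosedBall, fun k => (Y k).unitClosedBall_subset_closedBall,
    fun k => (Y k).isCompact_unitClosedBall, fun k => (Y k).convex_unitClosedBall,
    fun k => (Y k).finiteDimensional_span_unitClosedBall, fun θ hθ => ?_⟩
  obtain ⟨A, hA⟩ := exists_two_mul_abs_sum_ge θ
  have hsum : ∑ k, θ k * suppFn (Y k).unitClosedBall (F A) = ∑ k ∈ A, θ k := by
    simp [Y, suppFn_unitClosedBall_span_biorthogonal he hF hFe, Finset.sum_ite_mem]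
  have habs : ∑ k, |θ k| = n := by
    simp [fun k => show |θ k| = 1 by rcases hθ k with h | h <;> simp [h]]
  calc (n : ℝ) / 2 ≤ |∑ k ∈ A, θ k| := by linarith
    _ = |∑ k, θ k * suppFn (Y k).unitClosedBall (F A)| := by rw [hsum]
    _ ≤ _ := le_ciSup (bddAbove_range_abs_sum_suppFn
        (fun k => (Y k).unitClosedBall_subset_closedBall)
        (fun k => (Y k).zero_mem_unitClosedBall) θ) ⟨F A, hF A⟩

/-- if `dim X ≥ 2^n` there are finite-dimensional compact convex subsets
`V 1, ..., V n` of the unit ball such that for every choice of signs `θ k = ±1`,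
`‖∑ θ k R(V k)‖ ≥ n/2`, the norm being the sup norm over the dual unit sphere. -/
theorem stmt10 {X : Type*} [NormedAddCommGroup X] [NormedSpace ℝ X] [CompleteSpace X]
    (n : ℕ) (hdim : ((2 ^ n : ℕ) : Cardinal) ≤ Module.rank ℝ X) :
    ∃ V : Fin n → Set X,
      (∀ k, V k ⊆ Metric.closedBall (0 : X) 1) ∧
      (∀ k, IsCompact (V k)) ∧ (∀ k, Convex ℝ (V k)) ∧
      (∀ k, FiniteDimensional ℝ (Submodule.span ℝ (V k))) ∧
      ∀ θ : Fin n → ℝ, (∀ k, θ k = 1 ∨ θ k = -1) →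
        (n : ℝ) / 2 ≤
          ⨆ f : {f : X →L[ℝ] ℝ // ‖f‖ = 1}, |∑ k, θ k * suppFn (V k) f.1| :=
  stmt10_general n hdim
end

section
/- For every infinite-dimensional Banach space X there exists a sequence (V_n) of finite-dimensional compact convex subsets of the unit ball of X and ε > 0 such that for every sequence (ψ_i) of values in {0,1} and every n ∈ ℕ, the Hausdorff distance ρ_H( (1/4^n) ∑_{i=1}^{4^n} ψ_i V_i , (1/(2·4^n)) ∑_{i=1}^{4^n} V_i ) ≥ ε. -/
/-!
Take a biorthogonal system `g p (u q) = c δ_{pq}` with `‖u p‖, ‖g p‖ ≤ 1`, indexed by pairs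
`p = (n, T)` with `T` a subset of the `n`-th block of indices; it exists by Mazur's argument,
since a unit vector killed by finitely many functionals norming a finite-dimensional subspace `E`
stays at distance `1/3` from `E`. Let `V i` be the convex hull of `0` and of the `u (n, T)` with
`i ∈ T`, so that `g (n, T) ≤ c` on `V i` if `i ∈ T` and `g (n, T) ≤ 0` otherwise.

Given `ψ` and `n`, split block `n` into `T = {ψ = 1}` and its complement `T'`; one of them fills
at least `3/8` of `range (4 ^ n)`. If it is `T`, the point `4⁻ⁿ |T| u (n, T)` of the `ψ`-average is
pushed by `g (n, T)` a distance `c |T| / (2 · 4ⁿ) ≥ 3c/16` beyond the half average of all `V i`.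
If it is `T'`, the point `(2 · 4ⁿ)⁻¹ |T'| u (n, T')` of the half average lies `3c/16` beyond the
`ψ`-average, on which `g (n, T') ≤ 0`.
-/

open Pointwise

/-- The Hausdorff distance. -/
noncomputable def rhoH {X : Type*} [NormedAddCommGroup X] (A B : Set X) : ℝ :=
  max (rhoBar A B) (rhoBar B A)

open Metric Set

theorem isCompact_finsetSum {M ι : Type*} [AddCommMonoid M] [TopologicalSpace M]
    [ContinuousAdd M] {s : Finset ι} {S : ι → Set M} (h : ∀ i ∈ s, IsCompact (S i)) :
    IsCompact (∑ i ∈ s, S i) := by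
  induction s using Finset.cons_induction with
  | empty => simp
  | cons i s hi ih =>
    rw [Finset.sum_cons]
    exact (h i (Finset.mem_cons_self i s)).add (ih fun j hj => h j (Finset.mem_cons_of_mem hj))

theorem le_rhoBar {X : Type*} [NormedAddCommGroup X] {A B : Set X} (hA : A.Nonempty)
    (hB : Bornology.IsBounded B) {b : X} (hb : b ∈ B) {ε : ℝ} (h : ∀ a ∈ A, ε ≤ ‖a - b‖) :
    ε ≤ rhoBar A B := by
  have : Nonempty A := hA.to_subtype
  obtain ⟨a₀, ha₀⟩ := hA
  obtain ⟨R, hR⟩ := hB.subset_closedBall 0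
  have hbdd : BddAbove (range fun y : B => ⨅ a : A, ‖(a : X) - y‖) := by
    refine ⟨‖a₀‖ + R, forall_mem_range.2 fun y => ?_⟩
    calc ⨅ a : A, ‖(a : X) - y‖
        ≤ ‖a₀ - y‖ := ciInf_le ⟨0, forall_mem_range.2 fun _ => norm_nonneg _⟩ (⟨a₀, ha₀⟩ : A)
      _ ≤ ‖a₀‖ + ‖(y : X)‖ := norm_sub_le _ _
      _ ≤ ‖a₀‖ + R := by gcongr; simpa using hR y.2
  exact (le_ciInf fun a : A => h a a.2).trans (le_ciSup hbdd ⟨b, hb⟩)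

section

variable {X : Type*} [NormedAddCommGroup X] [NormedSpace ℝ X]

theorem dual_sub_le_norm_sub {φ : StrongDual ℝ X} (hφ : ‖φ‖ ≤ 1) (x y : X) :
    φ x - φ y ≤ ‖x - y‖ := by
  rw [← map_sub]
  exact (le_abs_self _).trans (by simpa using φ.le_of_opNorm_le hφ (x - y))

theorem dual_le_of_mem_finsetSum {ι : Type*} {s : Finset ι} {S : ι → Set X}
    (φ : StrongDual ℝ X) {M : ι → ℝ} (h : ∀ i ∈ s, ∀ x ∈ S i, φ x ≤ M i) {y : X}
    (hy : y ∈ ∑ i ∈ s, S i) : φ y ≤ ∑ i ∈ s, M i := by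
  obtain ⟨f, hf, rfl⟩ := (mem_finsetSum _ _ _).1 hy
  rw [map_sum]
  exact Finset.sum_le_sum fun i hi => h i hi _ (hf hi)

theorem exists_finset_dual_lt_of_isCompact {K : Set X} (hK : IsCompact K) {δ : ℝ} (hδ : 0 < δ) :
    ∃ Φ : Finset (StrongDual ℝ X), (∀ φ ∈ Φ, ‖φ‖ ≤ 1) ∧ ∀ x ∈ K, ∃ φ ∈ Φ, ‖x‖ - δ < φ x := by
  classical
  choose φ hφ hφx using fun x : X => exists_dual_vector'' ℝ x
  obtain ⟨t, ht⟩ := hK.elim_finite_subcover (fun c => {x | ‖x‖ - δ < φ c x})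
    (fun c => isOpen_lt (by fun_prop) (φ c).continuous)
    (fun x _ => mem_iUnion.2 ⟨x, by simp [hφx x, hδ]⟩)
  refine ⟨t.image φ, by simpa using fun c _ => hφ c, fun x hx => ?_⟩
  obtain ⟨c, hc, hxc⟩ := mem_iUnion₂.1 (ht hx)
  exact ⟨φ c, Finset.mem_image_of_mem φ hc, hxc⟩

theorem exists_norm_eq_one_forall_dual_eq_zero (hinf : ¬ FiniteDimensional ℝ X)
    (Φ : Finset (StrongDual ℝ X)) : ∃ u : X, ‖u‖ = 1 ∧ ∀ φ ∈ Φ, φ u = 0 := by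
  let L : X →ₗ[ℝ] (Φ → ℝ) := LinearMap.pi fun φ => (φ.1 : X →ₗ[ℝ] ℝ)
  obtain ⟨x, hxL, hx0⟩ : ∃ x, L x = 0 ∧ x ≠ 0 := by
    by_contra! h
    exact hinf (FiniteDimensional.of_injective L ((injective_iff_map_eq_zero L).2 h))
  refine ⟨‖x‖⁻¹ • x, norm_smul_inv_norm hx0, fun φ hφ => ?_⟩
  rw [map_smul, show φ x = 0 from congrFun hxL ⟨φ, hφ⟩, smul_zero]

theorem exists_norm_eq_one_forall_dual_eq_zero_le_infDist (hinf : ¬ FiniteDimensional ℝ X)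
    (E : Submodule ℝ X) [FiniteDimensional ℝ E] (G : Finset (StrongDual ℝ X)) :
    ∃ u : X, ‖u‖ = 1 ∧ (∀ φ ∈ G, φ u = 0) ∧ 1 / 3 ≤ infDist u E := by
  classical
  have hK : IsCompact (E ∩ closedBall (0 : X) 2 : Set X) := by
    simpa [Set.inter_comm] using (isCompact_closedBall (0 : E) 2).image continuous_subtype_val
  obtain ⟨Φ, hΦ, hΦK⟩ := exists_finset_dual_lt_of_isCompact hK (δ := 1 / 3) (by norm_num)
  obtain ⟨u, hu, huG⟩ := exists_norm_eq_one_forall_dual_eq_zero hinf (G ∪ Φ)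
  refine ⟨u, hu, fun φ hφ => huG φ (Finset.mem_union_left _ hφ),
    (le_infDist ⟨0, E.zero_mem⟩).2 fun d hd => ?_⟩
  -- `‖u - d‖ ≥ max (‖d‖ - 1/3) (1 - ‖d‖) ≥ 1/3` when `‖d‖ ≤ 2`, and `≥ 1` otherwise
  have hud : |1 - ‖d‖| ≤ ‖u - d‖ := hu ▸ abs_norm_sub_norm_le u d
  rw [dist_eq_norm]
  by_cases hd2 : ‖d‖ ≤ 2
  · obtain ⟨φ, hφΦ, hφd⟩ := hΦK d ⟨hd, mem_closedBall_zero_iff.2 hd2⟩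
    have hφu : φ u = 0 := huG φ (Finset.mem_union_right _ hφΦ)
    have := dual_sub_le_norm_sub (hΦ φ hφΦ) d u
    rw [hφu, norm_sub_rev] at this
    linarith [le_abs_self (1 - ‖d‖)]
  · linarith [neg_abs_le (1 - ‖d‖)]

theorem exists_dual_eq_of_le_infDist (E : Submodule ℝ X) (u : X) {r : ℝ} (hr0 : 0 ≤ r)
    (hr : r ≤ infDist u E) :
    ∃ g : StrongDual ℝ X, ‖g‖ ≤ 1 ∧ g u = r ∧ ∀ d ∈ E, g d = 0 := by
  obtain ⟨f, hf, hfu⟩ := exists_dual_vector'' ℝ (E.mkQL u)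
  have hfu' : f (E.mkQL u) = infDist u E := hfu.trans (QuotientAddGroup.norm_mk u)
  have hq : ‖E.mkQL‖ ≤ 1 := ContinuousLinearMap.opNorm_le_bound _ zero_le_one fun x => by
    simpa using Submodule.Quotient.norm_mk_le E x
  refine ⟨(r / infDist u E) • f.comp E.mkQL, ?_, ?_, fun d hd => ?_⟩
  · have hrD : ‖r / infDist u E‖ ≤ 1 := by
      rw [Real.norm_eq_abs, abs_div, abs_of_nonneg hr0, abs_of_nonneg infDist_nonneg]
      exact div_le_one_of_le₀ hr infDist_nonneg
    calc ‖(r / infDist u E) • f.comp E.mkQL‖ = ‖r / infDist u E‖ * ‖f.comp E.mkQL‖ :=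
          norm_smul _ _
      _ ≤ 1 * (1 * 1) := by gcongr; exact (f.opNorm_comp_le _).trans (by gcongr)
      _ = 1 := by norm_num
  -- `r / 0 = 0` takes care of `u ∈ closure E`, where `r = 0`
  · rw [smul_apply, ContinuousLinearMap.comp_apply, hfu', smul_eq_mul,
      div_mul_cancel_of_imp fun h => le_antisymm (h ▸ hr) hr0]
  · simp [(Submodule.Quotient.mk_eq_zero E).2 hd]

theorem exists_biorthogonal_extension (hinf : ¬ FiniteDimensional ℝ X)
    (s : Finset (X × StrongDual ℝ X)) :
    ∃ p : X × StrongDual ℝ X, (‖p.1‖ ≤ 1 ∧ ‖p.2‖ ≤ 1 ∧ p.2 p.1 = 1 / 3) ∧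
      ∀ q ∈ s, q.2 p.1 = 0 ∧ p.2 q.1 = 0 := by
  classical
  let E := Submodule.span ℝ (s.image Prod.fst : Set X)
  obtain ⟨u, hu, huG, huE⟩ :=
    exists_norm_eq_one_forall_dual_eq_zero_le_infDist hinf E (s.image Prod.snd)
  obtain ⟨g, hg, hgu, hgE⟩ := exists_dual_eq_of_le_infDist E u (by norm_num) huE
  exact ⟨(u, g), ⟨hu.le, hg, hgu⟩, fun q hq =>
    ⟨huG _ (Finset.mem_image_of_mem _ hq),
      hgE _ (Submodule.subset_span (Finset.mem_image_of_mem _ hq))⟩⟩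

theorem exists_biorthogonal {ι : Type*} [Countable ι] (hinf : ¬ FiniteDimensional ℝ X) :
    ∃ (u : ι → X) (g : ι → StrongDual ℝ X), (∀ k, ‖u k‖ ≤ 1) ∧ (∀ k, ‖g k‖ ≤ 1) ∧
      (∀ k, g k (u k) = 1 / 3) ∧ Pairwise fun k l => g k (u l) = 0 := by
  obtain ⟨p, hp, hpp⟩ := exists_seq_of_forall_finset_exists
    (fun p : X × StrongDual ℝ X => ‖p.1‖ ≤ 1 ∧ ‖p.2‖ ≤ 1 ∧ p.2 p.1 = 1 / 3)
    (fun q p => q.2 p.1 = 0 ∧ p.2 q.1 = 0) fun s _ => exists_biorthogonal_extension hinf s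
  obtain ⟨e, he⟩ := Countable.exists_injective_nat ι
  refine ⟨fun k => (p (e k)).1, fun k => (p (e k)).2, fun k => (hp _).1, fun k => (hp _).2.1,
    fun k => (hp _).2.2, fun k l hkl => ?_⟩
  rcases (he.ne hkl).lt_or_gt with h | h
  · exact (hpp _ _ h).1
  · exact (hpp _ _ h).2

namespace SLLNCounterexample

/-- Blocks overlap, but `i` lies only in the blocks with `n ≤ i`, which keeps every `blockHull`
finite-dimensional, while `block n` still fills three quarters of `range (4 ^ n)`. -/
def block (n : ℕ) : Finset ℕ := Finset.Ico n (4 ^ n)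

theorem block_subset_range (n : ℕ) : block n ⊆ Finset.range (4 ^ n) :=
  fun _ hj => Finset.mem_range.2 (Finset.mem_Ico.1 hj).2

theorem three_mul_four_pow_le_card_block (n : ℕ) : 3 * 4 ^ n ≤ 4 * (block n).card := by
  have h : 4 * n ≤ 4 ^ n := by
    cases n with
    | zero => simp
    | succ m => rw [pow_succ']; have := Nat.lt_pow_self (a := 4) (n := m); omega
  rw [block, Nat.card_Ico]
  omega

theorem finite_setOf_subset_block (i : ℕ) :
    {p : ℕ × Finset ℕ | p.2 ⊆ block p.1 ∧ i ∈ p.2}.Finite := by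
  refine ((finite_Iic i).prod (Finset.range (4 ^ i)).powerset.finite_toSet).subset ?_
  rintro ⟨m, T⟩ ⟨hT, hiT⟩
  have hmi : m ≤ i := (Finset.mem_Ico.1 (hT hiT)).1
  refine ⟨hmi, Finset.mem_powerset.2 fun j hj => ?_⟩
  exact Finset.mem_range.2 ((Finset.mem_Ico.1 (hT hj)).2.trans_le
    (Nat.pow_le_pow_right (by norm_num) hmi))

noncomputable def blockHull (u : ℕ × Finset ℕ → X) (i : ℕ) : Set X :=
  convexHull ℝ (insert 0 (u '' {p | p.2 ⊆ block p.1 ∧ i ∈ p.2}))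

section blockHull

variable (u : ℕ × Finset ℕ → X) (i : ℕ)

theorem zero_mem_blockHull : (0 : X) ∈ blockHull u i :=
  subset_convexHull ℝ _ (mem_insert _ _)

theorem mem_blockHull {n : ℕ} {T : Finset ℕ} (hT : T ⊆ block n) (hi : i ∈ T) :
    u (n, T) ∈ blockHull u i :=
  subset_convexHull ℝ _ (mem_insert_of_mem _ ⟨(n, T), ⟨hT, hi⟩, rfl⟩)

theorem convex_blockHull : Convex ℝ (blockHull u i) := convex_convexHull ℝ _

theorem isCompact_blockHull : IsCompact (blockHull u i) :=
  ((finite_setOf_subset_block i).image u).insert 0 |>.isCompact_convexHull (𝕜 := ℝ)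

theorem finiteDimensional_span_blockHull :
    FiniteDimensional ℝ (Submodule.span ℝ (blockHull u i)) :=
  have : FiniteDimensional ℝ
      (Submodule.span ℝ (insert 0 (u '' {p | p.2 ⊆ block p.1 ∧ i ∈ p.2}))) :=
    FiniteDimensional.span_of_finite ℝ (((finite_setOf_subset_block i).image u).insert 0)
  Submodule.finiteDimensional_of_le <| Submodule.span_le.2 <|
    convexHull_min Submodule.subset_span (Submodule.convex _)

theorem blockHull_subset_closedBall (hu : ∀ p, ‖u p‖ ≤ 1) :
    blockHull u i ⊆ closedBall (0 : X) 1 := by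
  refine convexHull_min ?_ (convex_closedBall _ _)
  rintro _ (rfl | ⟨p, -, rfl⟩)
  · exact mem_closedBall_self zero_le_one
  · exact mem_closedBall_zero_iff.2 (hu p)

end blockHull

theorem card_smul_mem_sum_smul_blockHull (u : ℕ × Finset ℕ → X) {s : Finset ℕ} {w : ℕ → ℝ}
    {n : ℕ} {T : Finset ℕ} (hT : T ⊆ block n) (hTs : T ⊆ s) (hw : ∀ i ∈ T, w i = 1) :
    (T.card : ℝ) • u (n, T) ∈ ∑ i ∈ s, w i • blockHull u i := by
  have : (T.card : ℝ) • u (n, T) = ∑ i ∈ s, if i ∈ T then u (n, T) else 0 := by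
    rw [Finset.sum_ite_mem, Finset.inter_eq_right.2 hTs, Finset.sum_const,
      Nat.cast_smul_eq_nsmul]
  rw [this]
  refine finsetSum_mem_finsetSum _ _ _ fun i _ => ?_
  split_ifs with hi
  · simpa [hw i hi] using smul_mem_smul_set (a := w i) (mem_blockHull u i hT hi)
  · exact zero_mem_smul_set (zero_mem_blockHull u i)

theorem zero_mem_smul_sum_smul_blockHull (u : ℕ × Finset ℕ → X) (s : Finset ℕ) (w : ℕ → ℝ)
    (r : ℝ) : (0 : X) ∈ r • ∑ i ∈ s, w i • blockHull u i :=
  zero_mem_smul_set <| by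
    simpa using finsetSum_mem_finsetSum s _ (fun _ => (0 : X))
      fun i _ => zero_mem_smul_set (zero_mem_blockHull u i)

theorem isBounded_smul_sum_smul_blockHull (u : ℕ × Finset ℕ → X) (s : Finset ℕ) (w : ℕ → ℝ)
    (r : ℝ) : Bornology.IsBounded (r • ∑ i ∈ s, w i • blockHull u i) :=
  ((isCompact_finsetSum fun i _ => (isCompact_blockHull u i).smul (w i)).smul r).isBounded

section biorthogonal

variable {u : ℕ × Finset ℕ → X} {g : ℕ × Finset ℕ → StrongDual ℝ X} {c : ℝ}
  (hc : 0 ≤ c) (hgu : ∀ p, g p (u p) = c) (hgu' : Pairwise fun p q => g p (u q) = 0)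
include hc hgu hgu'

theorem dual_le_of_mem_blockHull {i n : ℕ} {T : Finset ℕ} {x : X} (hx : x ∈ blockHull u i) :
    g (n, T) x ≤ if i ∈ T then c else 0 := by
  refine convexHull_min ?_ (convex_halfSpace_le (g (n, T)).isLinear _) hx
  have hM : (0 : ℝ) ≤ if i ∈ T then c else 0 := ite_nonneg hc le_rfl
  rintro _ (rfl | ⟨p, ⟨-, hip⟩, rfl⟩)
  · simpa using hM
  · by_cases hp : (n, T) = p
    · subst hp
      simp [hgu, hip]
    · simpa [hgu' hp] using hM

theorem dual_le_of_mem_sum_smul_blockHull {s : Finset ℕ} {w : ℕ → ℝ} (hw : ∀ i, 0 ≤ w i)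
    {n : ℕ} {T : Finset ℕ} (hTs : T ⊆ s) {y : X}
    (hy : y ∈ ∑ i ∈ s, w i • blockHull u i) : g (n, T) y ≤ c * ∑ i ∈ T, w i := by
  calc g (n, T) y ≤ ∑ i ∈ s, w i * (if i ∈ T then c else 0) := by
        refine dual_le_of_mem_finsetSum _ (fun i _ => ?_) hy
        rintro _ ⟨v, hv, rfl⟩
        rw [map_smul, smul_eq_mul]
        exact mul_le_mul_of_nonneg_left (dual_le_of_mem_blockHull hc hgu hgu' hv) (hw i)
    _ = c * ∑ i ∈ T, w i := by
        simp only [mul_ite, mul_zero]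
        rw [Finset.sum_ite_mem, Finset.inter_eq_right.2 hTs, Finset.mul_sum]
        simp only [mul_comm]

theorem le_rhoBar_smul_sum_smul_blockHull (hg : ∀ p, ‖g p‖ ≤ 1) {s : Finset ℕ} {n : ℕ}
    {T : Finset ℕ} (hT : T ⊆ block n) (hTs : T ⊆ s) {w w' : ℕ → ℝ} (hw : ∀ i ∈ T, w i = 1)
    (hw' : ∀ i, 0 ≤ w' i) {r r' : ℝ} (hr' : 0 ≤ r') :
    c * (r * T.card - r' * ∑ i ∈ T, w' i) ≤
      rhoBar (r' • ∑ i ∈ s, w' i • blockHull u i) (r • ∑ i ∈ s, w i • blockHull u i) := by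
  refine le_rhoBar ⟨0, zero_mem_smul_sum_smul_blockHull u s w' r'⟩
    (isBounded_smul_sum_smul_blockHull u s w r)
    (smul_mem_smul_set (card_smul_mem_sum_smul_blockHull u hT hTs hw)) ?_
  rintro _ ⟨y, hy, rfl⟩
  have hy' := dual_le_of_mem_sum_smul_blockHull hc hgu hgu' hw' (n := n) hTs hy
  calc c * (r * T.card - r' * ∑ i ∈ T, w' i)
      ≤ g (n, T) (r • (T.card : ℝ) • u (n, T)) - g (n, T) (r' • y) := by
        simp only [map_smul, smul_eq_mul, hgu]
        nlinarith [mul_le_mul_of_nonneg_left hy' hr']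
    _ ≤ ‖r' • y - r • (T.card : ℝ) • u (n, T)‖ := by
        rw [norm_sub_rev]; exact dual_sub_le_norm_sub (hg _) _ _

theorem le_rhoH_blockHull (hg : ∀ p, ‖g p‖ ≤ 1) (ψ : ℕ → ℝ) (hψ : ∀ i, ψ i = 0 ∨ ψ i = 1)
    (n : ℕ) :
    3 * c / 16 ≤ rhoH (((4 : ℝ) ^ n)⁻¹ • ∑ i ∈ Finset.range (4 ^ n), ψ i • blockHull u i)
      ((2 * (4 : ℝ) ^ n)⁻¹ • ∑ i ∈ Finset.range (4 ^ n), blockHull u i) := by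
  have hψ0 : ∀ i, 0 ≤ ψ i := fun i => by rcases hψ i with h | h <;> simp [h]
  rw [show ∑ i ∈ Finset.range (4 ^ n), blockHull u i =
      ∑ i ∈ Finset.range (4 ^ n), (1 : ℝ) • blockHull u i by simp only [one_smul]]
  set T := (block n).filter (ψ · = 1)
  set T' := (block n).filter (¬ ψ · = 1)
  have hT : T ⊆ block n := Finset.filter_subset _ _
  have hT' : T' ⊆ block n := Finset.filter_subset _ _
  have hcard : T.card + T'.card = (block n).card := Finset.card_filter_add_card_filter_not _
  have hblock := three_mul_four_pow_le_card_block n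
  have hsub := block_subset_range n
  have hN : (0 : ℝ) < 4 ^ n := by positivity
  rcases le_or_gt (3 * 4 ^ n) (8 * T.card) with h | h
  · refine le_trans ?_ ((le_rhoBar_smul_sum_smul_blockHull hc hgu hgu' hg
      hT (hT.trans hsub) (fun i hi => (Finset.mem_filter.1 hi).2) (fun _ => zero_le_one)
      (by positivity)).trans (le_max_right _ _))
    have h' : (3 : ℝ) * 4 ^ n ≤ 8 * T.card := by exact_mod_cast h
    rw [Finset.sum_const, nsmul_one]
    field_simp
    nlinarith
  · have h' : (3 : ℝ) * 4 ^ n ≤ 8 * T'.card := by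
      exact_mod_cast (by omega : 3 * 4 ^ n ≤ 8 * T'.card)
    refine le_trans ?_ ((le_rhoBar_smul_sum_smul_blockHull hc hgu hgu' hg
      hT' (hT'.trans hsub) (fun _ _ => rfl) hψ0 (by positivity)).trans (le_max_left _ _))
    rw [Finset.sum_eq_zero fun i hi => (hψ i).resolve_right (Finset.mem_filter.1 hi).2]
    field_simp
    nlinarith

end biorthogonal

end SLLNCounterexample

end

open SLLNCounterexample in
theorem stmt11_general {X : Type*} [NormedAddCommGroup X] [NormedSpace ℝ X]
    (hinf : ¬ FiniteDimensional ℝ X) :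
    ∃ V : ℕ → Set X,
      (∀ i, V i ⊆ Metric.closedBall (0 : X) 1) ∧
      (∀ i, IsCompact (V i)) ∧ (∀ i, Convex ℝ (V i)) ∧
      (∀ i, FiniteDimensional ℝ (Submodule.span ℝ (V i))) ∧
      ∃ ε > (0 : ℝ), ∀ ψ : ℕ → ℝ, (∀ i, ψ i = 0 ∨ ψ i = 1) → ∀ n : ℕ,
        ε ≤ rhoH
          (((4 : ℝ) ^ n)⁻¹ • ∑ i ∈ Finset.range (4 ^ n), ψ i • V i)
          ((2 * (4 : ℝ) ^ n)⁻¹ • ∑ i ∈ Finset.range (4 ^ n), V i) := by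
  obtain ⟨u, g, hu, hg, hgu, hgu'⟩ := exists_biorthogonal (ι := ℕ × Finset ℕ) hinf
  exact ⟨blockHull u, (blockHull_subset_closedBall u · hu), isCompact_blockHull u,
    convex_blockHull u, finiteDimensional_span_blockHull u, 3 * (1 / 3) / 16, by norm_num,
    le_rhoH_blockHull (by norm_num) hgu hgu' hg⟩

/-- in every infinite-dimensional Banach space `X` there is a sequence
`(V i)` of finite-dimensional compact convex subsets of the unit ball and `ε > 0` such
that for every `0`-`1` sequence `(ψ i)` and every `n`,
`ρ_H( 4⁻ⁿ ∑_{i<4ⁿ} ψ i • V i , (2·4ⁿ)⁻¹ ∑_{i<4ⁿ} V i ) ≥ ε`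
(sums are Minkowski sums). This shows the full form of the SLLN for random sets fails. -/
theorem stmt11 {X : Type*} [NormedAddCommGroup X] [NormedSpace ℝ X] [CompleteSpace X]
    (hinf : ¬ FiniteDimensional ℝ X) :
    ∃ V : ℕ → Set X,
      (∀ i, V i ⊆ Metric.closedBall (0 : X) 1) ∧
      (∀ i, IsCompact (V i)) ∧ (∀ i, Convex ℝ (V i)) ∧
      (∀ i, FiniteDimensional ℝ (Submodule.span ℝ (V i))) ∧
      ∃ ε > (0 : ℝ), ∀ ψ : ℕ → ℝ, (∀ i, ψ i = 0 ∨ ψ i = 1) → ∀ n : ℕ,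
        ε ≤ rhoH
          (((4 : ℝ) ^ n)⁻¹ • ∑ i ∈ Finset.range (4 ^ n), ψ i • V i)
          ((2 * (4 : ℝ) ^ n)⁻¹ • ∑ i ∈ Finset.range (4 ^ n), V i) :=
  stmt11_general hinf
end

section
/- Let X be a separable Banach space and F: Ω → BC(X) a Bochner integrable multifunction on a probability space with ∫_Ω F dμ = {0}. Then for almost all t ∈ Ω, the set F(t) consists of a single point. -/
open Pointwise MeasureTheory

/-- The unit sphere of the dual space `X*`. -/
def DualSphere (X : Type*) [NormedAddCommGroup X] [NormedSpace ℝ X] :=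
  {f : X →L[ℝ] ℝ // ‖f‖ = 1}

/-- The Rådström embedding of a set, viewed as the family of values of its support
function on the dual unit sphere. -/
noncomputable def Rad {X : Type*} [NormedAddCommGroup X] [NormedSpace ℝ X]
    (A : Set X) : DualSphere X → ℝ :=
  fun f => suppFn A f.1

/-- `‖A‖ = sup_{a ∈ A} ‖a‖`. -/
noncomputable def setNorm {X : Type*} [NormedAddCommGroup X] (A : Set X) : ℝ :=
  ⨆ a : A, ‖(a : X)‖

/-- A simple multifunction: finitely many values, with measurable preimages. -/
def SimpleMF {Ω X : Type*} [MeasurableSpace Ω] (F : Ω → Set X) : Prop :=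
  (Set.range F).Finite ∧ ∀ A : Set X, MeasurableSet (F ⁻¹' {A})

/-- Bochner integrability of a multifunction, decoded: the scalar function
`t ↦ ‖F t‖` has an integrable majorant and `F` is an a.e. (Hausdorff-distance) limit
of simple multifunctions. -/
def BochnerIntegrableMF {Ω X : Type*} [MeasurableSpace Ω] [NormedAddCommGroup X]
    (μ : Measure Ω) (F : Ω → Set X) : Prop :=
  (∃ g : Ω → ℝ, Integrable g μ ∧ ∀ᵐ t ∂μ, setNorm (F t) ≤ g t) ∧
  ∃ Fk : ℕ → Ω → Set X, (∀ k, SimpleMF (Fk k)) ∧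
    ∀ᵐ t ∂μ, Filter.Tendsto (fun k => rhoH (Fk k t) (F t)) Filter.atTop (nhds 0)

/-- The complement of the diagonal is covered by the open sets `{f x ≠ f y}`; take a countable
subcover. -/
theorem SeparatingDual.exists_countable_separating (R V : Type*) [Ring R] [TopologicalSpace R]
    [T2Space R] [AddCommGroup V] [TopologicalSpace V] [SecondCountableTopology (V × V)]
    [Module R V] [SeparatingDual R V] :
    ∃ T : Set (StrongDual R V), T.Countable ∧ ∀ x y : V, (∀ f ∈ T, f x = f y) → x = y := by
  obtain ⟨T, hTc, hT⟩ := TopologicalSpace.isOpen_iUnion_countable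
    (fun f : StrongDual R V => {p : V × V | f p.1 ≠ f p.2})
    fun f => isOpen_ne_fun (by fun_prop) (by fun_prop)
  refine ⟨T, hTc, fun x y hxy => ?_⟩
  by_contra hne
  have hcover : (x, y) ∈ ⋃ f : StrongDual R V, {p : V × V | f p.1 ≠ f p.2} :=
    Set.mem_iUnion.2 (SeparatingDual.exists_separating_of_ne hne)
  rw [← hT] at hcover
  obtain ⟨f, hf, hfxy⟩ := Set.mem_iUnion₂.1 hcover
  exact hfxy (hxy f hf)

section SupportFunction

variable {X : Type*} [NormedAddCommGroup X] [NormedSpace ℝ X]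

theorem le_suppFn_s16 {A : Set X} (hA : Bornology.IsBounded A) (f : X →L[ℝ] ℝ) {a : X}
    (ha : a ∈ A) : f a ≤ suppFn A f := by
  have hbdd : BddAbove (Set.range fun a : A => f a) := by
    rw [← Set.image_eq_range]
    exact (f.lipschitz.isBounded_image hA).bddAbove
  exact le_ciSup hbdd ⟨a, ha⟩

theorem suppFn_singleton (x : X) (f : X →L[ℝ] ℝ) : suppFn {x} f = f x := by
  simp [suppFn, ciSup_unique]

/-- `suppFn A f + suppFn A (-f)` is the width of `A` in the direction `f`. -/
theorem suppFn_add_suppFn_neg_nonneg {A : Set X} (hne : A.Nonempty)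
    (hA : Bornology.IsBounded A) (f : X →L[ℝ] ℝ) : 0 ≤ suppFn A f + suppFn A (-f) := by
  obtain ⟨a, ha⟩ := hne
  have h₁ := le_suppFn_s16 hA f ha
  have h₂ := le_suppFn_s16 hA (-f) ha
  rw [neg_apply] at h₂
  linarith

theorem apply_eq_of_suppFn_add_suppFn_neg_eq_zero {A : Set X} (hA : Bornology.IsBounded A)
    {f : X →L[ℝ] ℝ} (hwidth : suppFn A f + suppFn A (-f) = 0) {x y : X} (hx : x ∈ A)
    (hy : y ∈ A) : f x = f y := by
  have hx₁ := le_suppFn_s16 hA f hx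
  have hx₂ := le_suppFn_s16 hA (-f) hx
  have hy₁ := le_suppFn_s16 hA f hy
  have hy₂ := le_suppFn_s16 hA (-f) hy
  rw [neg_apply] at hx₂ hy₂
  linarith

/-- The width of `F t` in the direction `f` is nonnegative and integrates to `f c - f c = 0`. -/
theorem ae_apply_eq_of_integral_suppFn_eq_singleton {Ω : Type*} [MeasurableSpace Ω]
    {μ : Measure Ω} {F : Ω → Set X} (hF : ∀ t, (F t).Nonempty ∧ Bornology.IsBounded (F t))
    {c : X} (hint : ∀ f : X →L[ℝ] ℝ,
      Integrable (fun t => suppFn (F t) f) μ ∧ ∫ t, suppFn (F t) f ∂μ = suppFn {c} f)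
    (f : X →L[ℝ] ℝ) : ∀ᵐ t ∂μ, ∀ x ∈ F t, ∀ y ∈ F t, f x = f y := by
  obtain ⟨hf_int, hf_eq⟩ := hint f
  obtain ⟨hnegf_int, hnegf_eq⟩ := hint (-f)
  have hwidth_int : ∫ t, (suppFn (F t) f + suppFn (F t) (-f)) ∂μ = 0 := by
    rw [integral_add hf_int hnegf_int, hf_eq, hnegf_eq, suppFn_singleton, suppFn_singleton,
      neg_apply, add_neg_cancel]
  have hwidth : ∀ᵐ t ∂μ, suppFn (F t) f + suppFn (F t) (-f) = 0 :=
    (integral_eq_zero_iff_of_nonneg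
      (fun t => suppFn_add_suppFn_neg_nonneg (hF t).1 (hF t).2 f)
      (hf_int.add hnegf_int)).1 hwidth_int
  filter_upwards [hwidth] with t ht x hx y hy
  exact apply_eq_of_suppFn_add_suppFn_neg_eq_zero (hF t).2 ht hx hy

end SupportFunction

theorem stmt16_general {X : Type*} [NormedAddCommGroup X] [NormedSpace ℝ X]
    [TopologicalSpace.SeparableSpace X] {Ω : Type*} [MeasurableSpace Ω] (μ : Measure Ω)
    (F : Ω → Set X)
    (hval : ∀ t, (F t).Nonempty ∧ Bornology.IsBounded (F t) ∧ Convex ℝ (F t))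
    (hzero : ∀ f : X →L[ℝ] ℝ,
      Integrable (fun t => suppFn (F t) f) μ ∧ ∫ t, suppFn (F t) f ∂μ = suppFn {(0 : X)} f) :
    ∀ᵐ t ∂μ, ∃ x : X, F t = {x} := by
  obtain ⟨T, hTc, hTsep⟩ := SeparatingDual.exists_countable_separating ℝ X
  have hconst : ∀ᵐ t ∂μ, ∀ f ∈ T, ∀ x ∈ F t, ∀ y ∈ F t, f x = f y :=
    (ae_ball_iff hTc).2 fun f _ =>
      ae_apply_eq_of_integral_suppFn_eq_singleton (fun t => ⟨(hval t).1, (hval t).2.1⟩) hzero f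
  filter_upwards [hconst] with t ht
  obtain ⟨x, hx⟩ := (hval t).1
  exact ⟨x, Set.eq_singleton_iff_unique_mem.2
    ⟨hx, fun y hy => hTsep y x fun f hf => ht f hf y hy x hx⟩⟩

/-- if a Bochner integrable multifunction `F : Ω → BC(X)` on a separable Banach space
has integral `{0}` (i.e. all its support-functionals integrate to `0`), then for
almost all `t` the set `F t` is a single point. -/
theorem stmt16 {X : Type*} [NormedAddCommGroup X] [NormedSpace ℝ X] [CompleteSpace X]
    [TopologicalSpace.SeparableSpace X] {Ω : Type*} [MeasurableSpace Ω] (μ : Measure Ω) [IsProbabilityMeasure μ]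
    (F : Ω → Set X)
    (hval : ∀ t, (F t).Nonempty ∧ Bornology.IsBounded (F t) ∧ Convex ℝ (F t))
    (hint : BochnerIntegrableMF μ F)
    (hzero : ∀ f : X →L[ℝ] ℝ,
      Integrable (fun t => suppFn (F t) f) μ ∧ ∫ t, suppFn (F t) f ∂μ = suppFn {(0 : X)} f) :
    ∀ᵐ t ∂μ, ∃ x : X, F t = {x} :=
  stmt16_general μ F hval hzero
end
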